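/- Let n ≥ 1 and let X₁, …, Xₙ, Y₁, …, Yₙ be 2n real-valued square-integrable random variables on a common probability space that are mutually independent (the family of all 2n variables is independent). Let c₁, …, cₙ be real numbers and C ≥ 0 with |c_k| ≤ C for all k. Suppose D₁, …, Dₙ ≥ 0 are such that for each k ∈ {1, …, n} and every function g : ℝ → ℝ Lipschitz with constant at most 1, |E[g(X_k)] − E[g(Y_k)]| ≤ D_k. Then for every function f : ℝ → ℝ Lipschitz with constant at most 1, |E[f(Σ_{k=1}^n c_k X_k)] − E[f(Σ_{k=1}^n c_k Y_k)]| ≤ C · Σ_{k=1}^n D_k. -/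

import Mathlib

/-!
Hybrid argument: pass from `∑ c k * Y k` to `∑ c k * X k` by replacing one summand at a time.
At each swap the sum `U` of the untouched summands is independent of both the old summand
`c j * Y j` and the new one `c j * X j`, so by Fubini `E f(U + c X) - E f(U + c Y)` is an average,
over the law of `U`, of differences `E g(c X) - E g(c Y)` for the 1-Lipschitz functions
`g = f (u + ·)`; each of these is at most `|c| * D`.
-/

open MeasureTheory ProbabilityTheory

section

variable {Ω : Type*} [MeasurableSpace Ω] {P : Measure Ω}

lemma LipschitzWith.integrable_comp {E F : Type*} [NormedAddCommGroup E] [NormedAddCommGroup F]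
    [IsFiniteMeasure P] {K : NNReal} {f : E → F} (hf : LipschitzWith K f) {V : Ω → E}
    (hV : Integrable V P) : Integrable (fun ω => f (V ω)) P := by
  refine ((integrable_const ‖f 0‖).add (hV.norm.const_mul K)).mono'
    (hf.continuous.comp_aestronglyMeasurable hV.1) (ae_of_all _ fun ω => ?_)
  have h := hf.norm_sub_le (V ω) 0
  simp only [sub_zero, Pi.add_apply] at h ⊢
  linarith [norm_sub_norm_le (f (V ω)) (f 0)]

lemma abs_integral_sub_le_mul_of_lipschitzWith {A B : Ω → ℝ} {D : ℝ}
    (hAB : ∀ g : ℝ → ℝ, LipschitzWith 1 g → |(∫ ω, g (A ω) ∂P) - ∫ ω, g (B ω) ∂P| ≤ D)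
    {K : NNReal} {g : ℝ → ℝ} (hg : LipschitzWith K g) :
    |(∫ ω, g (A ω) ∂P) - ∫ ω, g (B ω) ∂P| ≤ K * D := by
  rcases eq_or_ne K 0 with rfl | hK
  · have hconst : ∀ x, g x = g 0 := fun x => by
      simpa [dist_eq_zero] using hg.dist_le_mul x 0
    simp [hconst]
  · have hg' : LipschitzWith 1 (fun x => (K : ℝ)⁻¹ * g x) := by
      have := (lipschitzWith_smul (K : ℝ)⁻¹).comp hg
      rwa [nnnorm_inv, NNReal.nnnorm_eq, inv_mul_cancel₀ hK] at this
    have h := hAB _ hg'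
    rw [integral_const_mul, integral_const_mul, ← mul_sub, abs_mul,
      abs_of_pos (by positivity), inv_mul_le_iff₀ (by positivity)] at h
    exact h

lemma abs_integral_comp_mul_sub_le {A B : Ω → ℝ} {D : ℝ}
    (hAB : ∀ g : ℝ → ℝ, LipschitzWith 1 g → |(∫ ω, g (A ω) ∂P) - ∫ ω, g (B ω) ∂P| ≤ D)
    (c : ℝ) {g : ℝ → ℝ} (hg : LipschitzWith 1 g) :
    |(∫ ω, g (c * A ω) ∂P) - ∫ ω, g (c * B ω) ∂P| ≤ |c| * D := by
  simpa using abs_integral_sub_le_mul_of_lipschitzWith hAB (hg.comp (lipschitzWith_smul c))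

namespace ProbabilityTheory

section Fubini

variable [IsFiniteMeasure P] {U A : Ω → ℝ} {f : ℝ → ℝ}

lemma IndepFun.integrable_comp_add_prod (h : IndepFun U A P) (hU : AEMeasurable U P)
    (hA : AEMeasurable A P) (hf : Continuous f) (hint : Integrable (fun ω => f (U ω + A ω)) P) :
    Integrable (fun p : ℝ × ℝ => f (p.1 + p.2)) ((P.map U).prod (P.map A)) := by
  rw [← (indepFun_iff_map_prod_eq_prod_map_map hU hA).1 h,
    integrable_map_measure (by fun_prop) (hU.prodMk hA)]
  exact hint

lemma IndepFun.integral_comp_add (h : IndepFun U A P) (hU : AEMeasurable U P)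
    (hA : AEMeasurable A P) (hf : Continuous f) (hint : Integrable (fun ω => f (U ω + A ω)) P) :
    ∫ ω, f (U ω + A ω) ∂P = ∫ u, ∫ a, f (u + a) ∂(P.map A) ∂(P.map U) := by
  rw [← integral_prod _ (h.integrable_comp_add_prod hU hA hf hint),
    ← (indepFun_iff_map_prod_eq_prod_map_map hU hA).1 h,
    integral_map (hU.prodMk hA) (by fun_prop)]

end Fubini

variable [IsProbabilityMeasure P]

lemma abs_integral_comp_add_sub_le {U A B : Ω → ℝ} (hU : Integrable U P) (hA : Integrable A P)
    (hB : Integrable B P) (hUA : IndepFun U A P) (hUB : IndepFun U B P) {K : ℝ}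
    (hAB : ∀ g : ℝ → ℝ, LipschitzWith 1 g → |(∫ ω, g (A ω) ∂P) - ∫ ω, g (B ω) ∂P| ≤ K)
    {f : ℝ → ℝ} (hf : LipschitzWith 1 f) :
    |(∫ ω, f (U ω + A ω) ∂P) - ∫ ω, f (U ω + B ω) ∂P| ≤ K := by
  have hUA' := hUA.integrable_comp_add_prod hU.aemeasurable hA.aemeasurable hf.continuous
    (hf.integrable_comp (hU.add hA))
  have hUB' := hUB.integrable_comp_add_prod hU.aemeasurable hB.aemeasurable hf.continuous
    (hf.integrable_comp (hU.add hB))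
  have hpointwise : ∀ u : ℝ,
      |(∫ a, f (u + a) ∂(P.map A)) - ∫ a, f (u + a) ∂(P.map B)| ≤ K := fun u => by
    have hfc := hf.continuous
    rw [integral_map hA.aemeasurable (by fun_prop), integral_map hB.aemeasurable (by fun_prop)]
    exact hAB _ (by simpa [Function.comp_def] using hf.comp (isometry_add_left u).lipschitz)
  have := Measure.isProbabilityMeasure_map (μ := P) hU.aemeasurable
  rw [hUA.integral_comp_add hU.aemeasurable hA.aemeasurable hf.continuous
      (hf.integrable_comp (hU.add hA)),
    hUB.integral_comp_add hU.aemeasurable hB.aemeasurable hf.continuous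
      (hf.integrable_comp (hU.add hB)),
    ← integral_sub hUA'.integral_prod_left hUB'.integral_prod_left]
  calc _ ≤ ∫ u, |(∫ a, f (u + a) ∂(P.map A)) - ∫ a, f (u + a) ∂(P.map B)| ∂(P.map U) :=
        abs_integral_le_integral_abs
    _ ≤ ∫ _, K ∂(P.map U) :=
        integral_mono (hUA'.integral_prod_left.sub hUB'.integral_prod_left).abs
          (integrable_const K) hpointwise
    _ = K := by simp

lemma abs_integral_comp_sum_sub_le_of_forall_ne_eq {ι : Type*} [Fintype ι] [DecidableEq ι]
    {Z Z' : ι → Ω → ℝ} (hZ : iIndepFun Z P) (hZ' : iIndepFun Z' P)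
    (hZi : ∀ k, Integrable (Z k) P) (hZi' : ∀ k, Integrable (Z' k) P) {j : ι}
    (hZZ' : ∀ k ≠ j, Z k = Z' k) (c : ι → ℝ) {D : ℝ}
    (hD : ∀ g : ℝ → ℝ, LipschitzWith 1 g → |(∫ ω, g (Z j ω) ∂P) - ∫ ω, g (Z' j ω) ∂P| ≤ D)
    {f : ℝ → ℝ} (hf : LipschitzWith 1 f) :
    |(∫ ω, f (∑ k, c k * Z k ω) ∂P) - ∫ ω, f (∑ k, c k * Z' k ω) ∂P| ≤ |c j| * D := by
  set U := ∑ k ∈ Finset.univ.erase j, fun ω => c k * Z k ω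
  have hU' : U = ∑ k ∈ Finset.univ.erase j, fun ω => c k * Z' k ω :=
    Finset.sum_congr rfl fun k hk => by rw [hZZ' k (Finset.ne_of_mem_erase hk)]
  have hsplit : ∀ V : ι → Ω → ℝ, (∀ k ≠ j, V k = Z k) →
      ∀ ω, ∑ k, c k * V k ω = U ω + c j * V j ω := fun V hV ω => by
    rw [← Finset.sum_erase_add _ _ (Finset.mem_univ j)]
    simp only [U, Finset.sum_apply]
    congr 1
    exact Finset.sum_congr rfl fun k hk => by rw [hV k (Finset.ne_of_mem_erase hk)]
  have hscaled : ∀ V : ι → Ω → ℝ, iIndepFun V P → iIndepFun (fun k ω => c k * V k ω) P :=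
    fun V hV => hV.comp (fun k x => c k * x) fun k => measurable_const_mul (c k)
  simp_rw [hsplit Z (fun _ _ => rfl), hsplit Z' (fun k hk => (hZZ' k hk).symm)]
  refine abs_integral_comp_add_sub_le ?_ ((hZi j).const_mul _) ((hZi' j).const_mul _) ?_ ?_
    (fun g hg => abs_integral_comp_mul_sub_le hD (c j) hg) hf
  · exact integrable_finsetSum' _ fun k _ => (hZi k).const_mul _
  · exact (hscaled Z hZ).indepFun_finsetSum_of_notMem₀
      (fun k => ((hZi k).const_mul _).aemeasurable) (Finset.notMem_erase j _)
  · rw [hU']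
    exact (hscaled Z' hZ').indepFun_finsetSum_of_notMem₀
      (fun k => ((hZi' k).const_mul _).aemeasurable) (Finset.notMem_erase j _)

end ProbabilityTheory

lemma abs_sub_le_sum_of_abs_succ_sub_le {n : ℕ} (φ : ℕ → ℝ) (b : Fin n → ℝ)
    (h : ∀ j : Fin n, |φ (j + 1) - φ j| ≤ b j) : |φ n - φ 0| ≤ ∑ j, b j := by
  rw [← Finset.sum_range_sub, ← Fin.sum_univ_eq_sum_range (fun j => φ (j + 1) - φ j)]
  exact (Finset.abs_sum_le_sum_abs _ _).trans (Finset.sum_le_sum fun j _ => h j)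

def hybrid {α : Type*} {n : ℕ} (x y : Fin n → α) (j : ℕ) : Fin n → α :=
  fun k => if (k : ℕ) < j then x k else y k

section

variable {α : Type*} {n : ℕ} (x y : Fin n → α)

@[simp] lemma hybrid_zero : hybrid x y 0 = y := by
  funext k; simp [hybrid]

@[simp] lemma hybrid_self : hybrid x y n = x := by
  funext k; simp [hybrid]

lemma hybrid_apply_self (j : Fin n) : hybrid x y j j = y j := by
  simp [hybrid]

lemma hybrid_succ_apply_self (j : Fin n) : hybrid x y (j + 1) j = x j := by
  simp [hybrid]

lemma hybrid_succ_apply_of_ne {j k : Fin n} (hkj : k ≠ j) :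
    hybrid x y (j + 1) k = hybrid x y j k := by
  have : (k : ℕ) < j + 1 ↔ (k : ℕ) < j := by
    rw [Nat.lt_succ_iff, Nat.le_iff_lt_or_eq, or_iff_left (Fin.val_ne_of_ne hkj)]
  simp only [hybrid, this]

lemma hybrid_eq_sumElim_comp (j : ℕ) :
    hybrid x y j = fun k : Fin n => Sum.elim x y (if (k : ℕ) < j then .inl k else .inr k) := by
  funext k; unfold hybrid; split_ifs <;> rfl

end

lemma ProbabilityTheory.iIndepFun.hybrid {n : ℕ} {X Y : Fin n → Ω → ℝ}
    (h : iIndepFun (Sum.elim X Y) P) (j : ℕ) : iIndepFun (hybrid X Y j) P := by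
  rw [hybrid_eq_sumElim_comp]
  refine h.precomp fun k l hkl => ?_
  split_ifs at hkl <;> simpa using hkl

end

theorem stmt1_general
    {Ω : Type*} [MeasurableSpace Ω] (P : Measure Ω) [IsProbabilityMeasure P]
    (n : ℕ)
    (X Y : Fin n → Ω → ℝ)
    (hX : ∀ k, MemLp (X k) 2 P) (hY : ∀ k, MemLp (Y k) 2 P)
    (hindep : iIndepFun (Sum.elim X Y) P)
    (c : Fin n → ℝ) (C : ℝ) (hc : ∀ k, |c k| ≤ C)
    (D : Fin n → ℝ) (hD : ∀ k, 0 ≤ D k)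
    (hDbound : ∀ k, ∀ g : ℝ → ℝ, LipschitzWith 1 g →
      |(∫ ω, g (X k ω) ∂P) - ∫ ω, g (Y k ω) ∂P| ≤ D k)
    (f : ℝ → ℝ) (hf : LipschitzWith 1 f) :
    |(∫ ω, f (∑ k, c k * X k ω) ∂P) - ∫ ω, f (∑ k, c k * Y k ω) ∂P| ≤
      C * ∑ k, D k := by
  have hint : ∀ j k, Integrable (hybrid X Y j k) P := fun j k => by
    unfold hybrid; split_ifs
    exacts [(hX k).integrable one_le_two, (hY k).integrable one_le_two]
  set φ : ℕ → ℝ := fun j => ∫ ω, f (∑ k, c k * hybrid X Y j k ω) ∂P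
  have hswap : ∀ j : Fin n, |φ (j + 1) - φ j| ≤ C * D j := fun j => by
    have hDj := hDbound j
    rw [← hybrid_succ_apply_self X Y j, ← hybrid_apply_self X Y j] at hDj
    refine (abs_integral_comp_sum_sub_le_of_forall_ne_eq (hindep.hybrid _) (hindep.hybrid _)
      (hint _) (hint _) (fun k hk => hybrid_succ_apply_of_ne X Y hk) c hDj hf).trans ?_
    exact mul_le_mul_of_nonneg_right (hc j) (hD j)
  simpa only [φ, hybrid_self, hybrid_zero, Finset.mul_sum] using
    abs_sub_le_sum_of_abs_succ_sub_le φ _ hswap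

/-- Hybrid-argument Wasserstein bound: if the `2n` square-integrable
random variables `X₁, …, Xₙ, Y₁, …, Yₙ` are mutually independent, `|c k| ≤ C`, and
`D k` bounds `|E[g(X k)] - E[g(Y k)]|` over all 1-Lipschitz `g`, then for every
1-Lipschitz `f`, `|E[f(Σ c k • X k)] - E[f(Σ c k • Y k)]| ≤ C · Σ D k`. -/
theorem stmt1
    {Ω : Type*} [MeasurableSpace Ω] (P : Measure Ω) [IsProbabilityMeasure P]
    (n : ℕ) (hn : 1 ≤ n)
    (X Y : Fin n → Ω → ℝ)
    (hX : ∀ k, MemLp (X k) 2 P) (hY : ∀ k, MemLp (Y k) 2 P)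
    (hindep : iIndepFun (Sum.elim X Y) P)
    (c : Fin n → ℝ) (C : ℝ) (hC : 0 ≤ C) (hc : ∀ k, |c k| ≤ C)
    (D : Fin n → ℝ) (hD : ∀ k, 0 ≤ D k)
    (hDbound : ∀ k, ∀ g : ℝ → ℝ, LipschitzWith 1 g →
      |(∫ ω, g (X k ω) ∂P) - ∫ ω, g (Y k ω) ∂P| ≤ D k)
    (f : ℝ → ℝ) (hf : LipschitzWith 1 f) :
    |(∫ ω, f (∑ k, c k * X k ω) ∂P) - ∫ ω, f (∑ k, c k * Y k ω) ∂P| ≤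
      C * ∑ k, D k :=
  stmt1_general P n X Y hX hY hindep c C hc D hD hDbound f hf
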